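/- Let H(s) = ∫_s^∞ h(t−1) dt for s ≥ 2, and let α = e²·H(2)/2. Then: (i) H(s) ≤ (e/3)·s·h(s) for all s ≥ 3; (ii) H(3) ≤ (e(2α−1)/3)·s·h(s) for all 2 ≤ s ≤ 3; (iii) H(3) ≤ (2α−1)·s·h(s) for all 1 ≤ s ≤ 2. -/

import Mathlib

/-!
Since `3 / s ≤ 1` for `s ≥ 3`, `h(t - 1) ≤ e^{1-t}` for `t ≥ 3`, so `H(s) ≤ e^{1-s}`, while
`s h(s) = 3 e^{-s}` for `s ≥ 3`; this is (i). As `h(t - 1) = e^{-2}` on `(2, 3]`,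
`H(2) = e^{-2} + H(3)`, i.e. `2α - 1 = e² H(3)`. Then (ii) reduces to `3 e^{-3} ≤ s e^{-s}` on `[1, 3]`
(`s e^{-s}` decreases past `1`), and (iii), where `s h(s) = s e^{-2}`, to `H(3) ≤ s H(3)`.
-/

open Real MeasureTheory Set

noncomputable def hfun (s : ℝ) : ℝ :=
  if s ≤ 2 then Real.exp (-2) else if s ≤ 3 then Real.exp (-s) else 3 / s * Real.exp (-s)

noncomputable def Hfun (s : ℝ) : ℝ := ∫ t in Set.Ioi s, hfun (t - 1)

lemma hfun_nonneg (s : ℝ) : 0 ≤ hfun s := by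
  unfold hfun
  split_ifs with h₂ h₃
  · positivity
  · positivity
  · have : 0 < s := by linarith
    positivity

lemma hfun_of_le_two {s : ℝ} (hs : s ≤ 2) : hfun s = exp (-2) := by
  rw [hfun, if_pos hs]

lemma hfun_of_mem_Icc {s : ℝ} (hs₂ : 2 ≤ s) (hs₃ : s ≤ 3) : hfun s = exp (-s) := by
  rcases hs₂.eq_or_lt with rfl | hs₂
  · exact hfun_of_le_two le_rfl
  · rw [hfun, if_neg hs₂.not_ge, if_pos hs₃]

lemma mul_hfun_of_three_le {s : ℝ} (hs : 3 ≤ s) : s * hfun s = 3 * exp (-s) := by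
  rcases hs.eq_or_lt with rfl | hs
  · rw [hfun_of_mem_Icc (by norm_num) le_rfl]
  · rw [hfun, if_neg (by linarith), if_neg hs.not_ge]
    field_simp

lemma hfun_le_exp_neg {s : ℝ} (hs : 2 ≤ s) : hfun s ≤ exp (-s) := by
  rcases le_total s 3 with hs₃ | hs₃
  · exact (hfun_of_mem_Icc hs hs₃).le
  · have hs₀ : 0 < s := by linarith
    have h := mul_hfun_of_three_le hs₃
    nlinarith [exp_pos (-s)]

lemma hfun_le_exp_one_sub (s : ℝ) : hfun s ≤ exp (1 - s) := by
  rcases le_total s 2 with hs₂ | hs₂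
  · rw [hfun_of_le_two hs₂]
    exact exp_le_exp.mpr (by linarith)
  · exact (hfun_le_exp_neg hs₂).trans (exp_le_exp.mpr (by linarith))

lemma measurable_hfun : Measurable hfun := by
  unfold hfun
  refine Measurable.ite measurableSet_Iic measurable_const ?_
  exact Measurable.ite measurableSet_Iic (by fun_prop) (by fun_prop)

lemma integrableOn_hfun_sub_one (a : ℝ) : IntegrableOn (fun t => hfun (t - 1)) (Ioi a) := by
  have hdom : IntegrableOn (fun t => exp 2 * exp (-t)) (Ioi a) :=
    (integrableOn_exp_neg_Ioi a).const_mul _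
  refine hdom.mono' (measurable_hfun.comp (measurable_id.sub_const 1)).aestronglyMeasurable ?_
  refine ae_of_all _ fun t => ?_
  rw [norm_of_nonneg (hfun_nonneg _), ← exp_add]
  exact (hfun_le_exp_one_sub _).trans_eq (by ring_nf)

lemma Hfun_nonneg (s : ℝ) : 0 ≤ Hfun s :=
  setIntegral_nonneg measurableSet_Ioi fun _ _ => hfun_nonneg _

lemma Hfun_le_exp_one_sub {s : ℝ} (hs : 3 ≤ s) : Hfun s ≤ exp 1 * exp (-s) := by
  calc Hfun s ≤ ∫ t in Ioi s, exp 1 * exp (-t) := by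
        refine setIntegral_mono_on (integrableOn_hfun_sub_one s)
          ((integrableOn_exp_neg_Ioi s).const_mul _) measurableSet_Ioi fun t ht => ?_
        rw [← exp_add]
        exact (hfun_le_exp_neg (by linarith [mem_Ioi.mp ht])).trans_eq (by ring_nf)
    _ = exp 1 * exp (-s) := by rw [integral_const_mul, integral_exp_neg_Ioi]

lemma Hfun_two : Hfun 2 = exp (-2) + Hfun 3 := by
  rw [Hfun, Hfun, ← Ioc_union_Ioi_eq_Ioi (by norm_num : (2 : ℝ) ≤ 3),
    setIntegral_union Ioc_disjoint_Ioi_same measurableSet_Ioi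
      ((integrableOn_hfun_sub_one 2).mono_set Ioc_subset_Ioi_self) (integrableOn_hfun_sub_one 3),
    setIntegral_congr_fun measurableSet_Ioc
      (g := fun _ => exp (-2)) fun t ht => hfun_of_le_two (by linarith [ht.2]),
    setIntegral_const, measureReal_def, Real.volume_Ioc]
  norm_num

lemma three_mul_exp_neg_three_le {s : ℝ} (hs₁ : 1 ≤ s) (hs₃ : s ≤ 3) :
    3 * exp (-3) ≤ s * exp (-s) := by
  have hlin : 4 - s ≤ exp (3 - s) := by linarith [add_one_le_exp (3 - s)]
  have hsplit : s * exp (-s) = s * exp (3 - s) * exp (-3) := by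
    rw [mul_assoc, ← exp_add]; ring_nf
  rw [hsplit]
  gcongr
  nlinarith

/-- Lemma 2.5: with `α = e² H(2) / 2`, we have `H(s) ≤ (e/3) s h(s)` for `s ≥ 3`,
`H(3) ≤ (e (2α - 1) / 3) s h(s)` for `2 ≤ s ≤ 3`, and `H(3) ≤ (2α - 1) s h(s)` for
`1 ≤ s ≤ 2`. -/
theorem Hfun_bounds :
    (∀ s : ℝ, 3 ≤ s → Hfun s ≤ Real.exp 1 / 3 * s * hfun s) ∧
    (∀ s : ℝ, 2 ≤ s → s ≤ 3 →
      Hfun 3 ≤ Real.exp 1 * (2 * (Real.exp 2 * Hfun 2 / 2) - 1) / 3 * s * hfun s) ∧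
    (∀ s : ℝ, 1 ≤ s → s ≤ 2 →
      Hfun 3 ≤ (2 * (Real.exp 2 * Hfun 2 / 2) - 1) * s * hfun s) := by
  have hα : 2 * (exp 2 * Hfun 2 / 2) - 1 = exp 2 * Hfun 3 := by
    rw [Hfun_two, mul_add, ← exp_add]; norm_num; ring
  have he : exp 1 * exp 2 * exp (-3) = 1 := by
    rw [← exp_add, ← exp_add]; norm_num
  refine ⟨fun s hs => ?_, fun s hs₂ hs₃ => ?_, fun s hs₁ hs₂ => ?_⟩
  · rw [mul_assoc, mul_hfun_of_three_le hs]
    linarith [Hfun_le_exp_one_sub hs]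
  · rw [hα, hfun_of_mem_Icc hs₂ hs₃]
    have h := three_mul_exp_neg_three_le (by linarith) hs₃
    have hc : 0 ≤ exp 1 * (exp 2 * Hfun 3) / 3 := by have := Hfun_nonneg 3; positivity
    calc Hfun 3 = exp 1 * (exp 2 * Hfun 3) / 3 * (3 * exp (-3)) := by
          linear_combination -Hfun 3 * he
      _ ≤ exp 1 * (exp 2 * Hfun 3) / 3 * (s * exp (-s)) := mul_le_mul_of_nonneg_left h hc
      _ = _ := by ring
  · have he₂ : exp 2 * exp (-2) = 1 := by rw [← exp_add]; norm_num
    rw [hα, hfun_of_le_two hs₂]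
    calc Hfun 3 ≤ s * Hfun 3 := le_mul_of_one_le_left (Hfun_nonneg 3) hs₁
      _ = exp 2 * Hfun 3 * s * exp (-2) := by linear_combination -s * Hfun 3 * he₂
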